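/- arXiv:1407.7630 — 3 statements merged into one kernel-verified Lean document; each statement's English description precedes it below -/
import Mathlib

section
/- Let n ≥ 2, 2 ≤ k ≤ n and λ ∈ Γ_k ⊂ ℝ^n. Then for every index 1 ≤ i ≤ n, the vector λ\^i ∈ ℝ^{n−1} obtained from λ by deleting its i-th coordinate lies in the Gårding cone Γ_{k−1} of ℝ^{n−1}; in particular σ_{k−1}(λ\^i) > 0. -/
/-- The `k`-th elementary symmetric polynomial `σ_k` of `x ∈ ℝⁿ`. -/
noncomputable def esymm {n : ℕ} (k : ℕ) (x : Fin n → ℝ) : ℝ :=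
  ∑ s ∈ Finset.univ.powersetCard k, ∏ i ∈ s, x i

/-- The Gårding cone `Γ_k = {x : σ_j(x) > 0 for all 1 ≤ j ≤ k}`. -/
def GammaCone {n : ℕ} (k : ℕ) (x : Fin n → ℝ) : Prop :=
  ∀ j : ℕ, 1 ≤ j → j ≤ k → 0 < esymm j x

/-- The vector `x\^i ∈ ℝ^{n-1}` obtained from `x ∈ ℝⁿ` by deleting its `i`-th coordinate. -/
def deleteAt {n : ℕ} (x : Fin n → ℝ) (i : Fin n) (j : Fin (n - 1)) : ℝ :=
  if (j : ℕ) < (i : ℕ) then x ⟨j, Nat.lt_of_lt_of_le j.isLt (Nat.sub_le n 1)⟩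
  else x ⟨(j : ℕ) + 1, Nat.add_lt_of_lt_sub j.isLt⟩

open Polynomial

lemma esymm_eq_multiset {n : ℕ} (k : ℕ) (x : Fin n → ℝ) :
    esymm k x = (Finset.univ.val.map x).esymm k := by
  rw [Finset.esymm_map_val]; rfl

lemma esymm_zero {n : ℕ} (x : Fin n → ℝ) : esymm 0 x = 1 := by
  simp [esymm]

lemma esymm_eq_zero_of_lt {n k : ℕ} (hk : n < k) (x : Fin n → ℝ) : esymm k x = 0 := by
  unfold esymm
  rw [Finset.powersetCard_eq_empty.2 (by simpa using hk)]
  simp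

lemma Multiset.esymm_pos' (s : Multiset ℝ) (h : ∀ a ∈ s, 0 < a) {k : ℕ}
    (hk : k ≤ Multiset.card s) : 0 < s.esymm k := by
  unfold Multiset.esymm
  have hne : Multiset.powersetCard k s ≠ 0 := by
    intro h0
    have := Multiset.card_powersetCard k s
    rw [h0] at this
    simp only [Multiset.card_zero] at this
    exact absurd (Nat.choose_pos hk) (by omega)
  have hpos : ∀ x ∈ (Multiset.powersetCard k s).map Multiset.prod, 0 < x := by
    intro x hx
    obtain ⟨t, ht, rfl⟩ := Multiset.mem_map.1 hx
    obtain ⟨hts, _⟩ := Multiset.mem_powersetCard.1 ht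
    exact Multiset.prod_pos fun a ha => h a (Multiset.mem_of_le hts ha)
  have hne2 : ((Multiset.powersetCard k s).map Multiset.prod) ≠ 0 := by simpa using hne
  obtain ⟨b, hb⟩ := Multiset.exists_mem_of_ne_zero hne2
  obtain ⟨u, hu⟩ := Multiset.exists_cons_of_mem hb
  rw [hu, Multiset.sum_cons]
  have h1 : 0 < b := hpos b hb
  have h2 : 0 ≤ u.sum := Multiset.sum_nonneg fun y hy => le_of_lt (hpos y (hu ▸ Multiset.mem_cons_of_mem hy))
  linarith

lemma esymm_pos_of_pos {n k : ℕ} (hk : k ≤ n) (x : Fin n → ℝ) (h : ∀ j, 0 < x j) :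
    0 < esymm k x := by
  rw [esymm_eq_multiset]
  apply Multiset.esymm_pos'
  · intro a ha
    obtain ⟨j, _, rfl⟩ := Multiset.mem_map.1 ha
    exact h j
  · simpa using hk

lemma Multiset.esymm_cons (a : ℝ) (s : Multiset ℝ) (m : ℕ) :
    (a ::ₘ s).esymm (m + 1) = s.esymm (m + 1) + a * s.esymm m := by
  unfold Multiset.esymm
  rw [Multiset.powersetCard_cons, Multiset.map_add, Multiset.sum_add, Multiset.map_map]
  congr 1
  rw [← Multiset.sum_map_mul_left]
  congr 1
  apply Multiset.map_congr rfl
  intro t _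
  simp [Multiset.prod_cons]

lemma deleteAt_eq_succAbove {n : ℕ} (x : Fin (n + 1) → ℝ) (i : Fin (n + 1)) :
    deleteAt x i = fun j => x (i.succAbove j) := by
  funext j
  unfold deleteAt Fin.succAbove
  rcases lt_or_ge ((j : ℕ)) ((i : ℕ)) with h | h
  · rw [if_pos h, if_pos (by simpa [Fin.lt_def] using h)]
    congr 1
  · rw [if_neg (by omega), if_neg (by simp [Fin.lt_def]; omega)]
    congr 1

lemma multiset_delete {n : ℕ} (x : Fin (n + 1) → ℝ) (i : Fin (n + 1)) :
    (Finset.univ.val.map x : Multiset ℝ) = x i ::ₘ (Finset.univ.val.map (deleteAt x i)) := by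
  rw [deleteAt_eq_succAbove]
  have h1 : (Finset.univ.val.map (fun j => x (i.succAbove j)) : Multiset ℝ)
      = (Finset.univ.val.map i.succAbove).map x := by
    rw [Multiset.map_map]; rfl
  rw [h1]
  have h2 : (Finset.univ.val.map i.succAbove : Multiset (Fin (n+1)))
      = (Finset.univ.erase i).val := by
    have : Finset.univ.map ⟨i.succAbove, i.succAbove_right_injective⟩ = Finset.univ.erase i := by
      rw [Finset.map_eq_image]
      simpa [Finset.compl_singleton] using Fin.image_succAbove_univ i
    have := congrArg Finset.val this
    simpa using this
  rw [h2, Finset.erase_val, ← Multiset.map_cons, Multiset.cons_erase (by simp : i ∈ (Finset.univ.val : Multiset (Fin (n+1))))]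

lemma esymm_delete {n : ℕ} (x : Fin (n + 1) → ℝ) (i : Fin (n + 1)) (m : ℕ) :
    esymm (m + 1) x = esymm (m + 1) (deleteAt x i) + x i * esymm m (deleteAt x i) := by
  rw [esymm_eq_multiset, esymm_eq_multiset, esymm_eq_multiset, multiset_delete x i,
    Multiset.esymm_cons]

/-- the polynomial `∏ (X + a)` over a multiset -/
noncomputable def polyOf (s : Multiset ℝ) : ℝ[X] := (s.map fun a => X + C a).prod

lemma polyOf_monic (s : Multiset ℝ) : (polyOf s).Monic :=
  Polynomial.monic_multiset_prod_of_monic s _ fun a _ => monic_X_add_C a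

lemma polyOf_natDegree (s : Multiset ℝ) : (polyOf s).natDegree = Multiset.card s := by
  rw [polyOf, Polynomial.natDegree_multiset_prod_of_monic _ (fun f hf => by
    obtain ⟨a, _, rfl⟩ := Multiset.mem_map.1 hf; exact monic_X_add_C a)]
  rw [Multiset.map_map]
  simp [Function.comp_def, natDegree_X_add_C]

lemma polyOf_roots (s : Multiset ℝ) : (polyOf s).roots = s.map (fun a => -a) := by
  rw [polyOf, Polynomial.roots_multiset_prod]
  · rw [Multiset.bind_map]
    have : ∀ a ∈ s, (X + C a).roots = ({-a} : Multiset ℝ) := by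
      intro a _
      have : X + C a = X - C (-a) := by ring_nf; simp [sub_eq_add_neg]
      rw [this, roots_X_sub_C]
    calc s.bind (fun a => (X + C a).roots) = s.bind (fun a => ({-a} : Multiset ℝ)) :=
        Multiset.bind_congr this
      _ = s.map fun a => -a := Multiset.bind_singleton s _
  · intro h0
    obtain ⟨a, _, ha⟩ := Multiset.mem_map.1 h0
    exact (monic_X_add_C a).ne_zero ha

lemma polyOf_coeff (s : Multiset ℝ) {j : ℕ} (hj : j ≤ Multiset.card s) :
    (polyOf s).coeff j = s.esymm (Multiset.card s - j) :=
  Multiset.prod_X_add_C_coeff s hj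

lemma eval_pos_of_coeff (g : ℝ[X]) (h : ∀ l, 0 ≤ g.coeff l) (h0 : 0 < g.coeff 0)
    {t : ℝ} (ht : 0 ≤ t) : 0 < g.eval t := by
  rw [Polynomial.eval_eq_sum_range' (Nat.lt_succ_self g.natDegree)]
  have h00 : (0:ℝ) < g.coeff 0 * t ^ 0 := by simpa using h0
  calc (0:ℝ) < g.coeff 0 * t ^ 0 := h00
    _ ≤ ∑ i ∈ Finset.range (g.natDegree + 1), g.coeff i * t ^ i :=
      Finset.single_le_sum (fun i _ => mul_nonneg (h i) (pow_nonneg ht i))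
        (Finset.mem_range.2 (Nat.succ_pos _))

lemma key_contradiction {m k : ℕ} (hk2 : 2 ≤ k) (hkm : k ≤ m) (μ : Fin m → ℝ)
    (hnn : ∀ j, 1 ≤ j → j ≤ k - 1 → 0 ≤ esymm j μ)
    (hzero : esymm (k - 1) μ = 0) (hkpos : 0 < esymm k μ) : False := by
  set s : Multiset ℝ := Finset.univ.val.map μ with hs
  have hcard : Multiset.card s = m := by simp [hs]
  set q := polyOf s with hq
  set g := (⇑derivative)^[m - k] q with hg
  have hqdeg : q.natDegree = m := by rw [hq, polyOf_natDegree, hcard]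
  have hcoeff : ∀ l, l ≤ k →
      g.coeff l = ((l + (m - k)).descFactorial (m - k) : ℝ) * esymm (k - l) μ := by
    intro l hl
    rw [hg, Polynomial.coeff_iterate_derivative, nsmul_eq_mul]
    congr 1
    rw [hq, polyOf_coeff s (by omega), esymm_eq_multiset, hcard]
    congr 1
    omega
  have hcoeff_hi : ∀ l, k < l → g.coeff l = 0 := by
    intro l hl
    rw [hg, Polynomial.coeff_iterate_derivative, nsmul_eq_mul]
    have : q.coeff (l + (m - k)) = 0 := Polynomial.coeff_eq_zero_of_natDegree_lt (by omega)
    rw [this, mul_zero]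
  have hdesc_pos : ∀ l : ℕ, (0:ℝ) < ((l + (m - k)).descFactorial (m - k) : ℝ) := by
    intro l
    have : (l + (m - k)).descFactorial (m - k) ≠ 0 := by
      rw [Ne, Nat.descFactorial_eq_zero_iff_lt]
      omega
    exact_mod_cast Nat.pos_of_ne_zero this
  have hc0 : 0 < g.coeff 0 := by
    rw [hcoeff 0 (by omega)]
    exact mul_pos (hdesc_pos 0) (by simpa using hkpos)
  have hc1 : g.coeff 1 = 0 := by
    rw [hcoeff 1 (by omega), hzero, mul_zero]
  have hcnn : ∀ l, 0 ≤ g.coeff l := by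
    intro l
    rcases l with _ | l
    · exact le_of_lt hc0
    rcases l with _ | l
    · rw [hc1]
    set l' := l + 1 + 1 with hl'
    rcases Nat.lt_or_ge k l' with h | h
    · rw [hcoeff_hi l' h]
    rcases Nat.eq_or_lt_of_le h with rfl | h'
    · rw [hcoeff l' le_rfl, Nat.sub_self, esymm_zero, mul_one]
      exact le_of_lt (hdesc_pos l')
    rw [hcoeff l' h]
    apply mul_nonneg (le_of_lt (hdesc_pos l'))
    exact hnn (k - l') (by omega) (by omega)
  have hck : 0 < g.coeff k := by
    rw [hcoeff k le_rfl, Nat.sub_self, esymm_zero, mul_one]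
    exact hdesc_pos k
  have hgdeg : g.natDegree = k :=
    le_antisymm (Polynomial.natDegree_le_iff_coeff_eq_zero.2 fun N hN => hcoeff_hi N hN)
      (Polynomial.le_natDegree_of_ne_zero hck.ne')
  have hqroots : Multiset.card q.roots = m := by
    rw [hq, polyOf_roots]; simp [hcard]
  have hiter : ∀ r, m - r ≤ Multiset.card ((⇑derivative)^[r] q).roots := by
    intro r
    induction r with
    | zero => simp [hqroots]
    | succ r ih =>
      have := Polynomial.card_roots_le_derivative ((⇑derivative)^[r] q)
      rw [Function.iterate_succ_apply']
      omega
  have hgroots : Multiset.card g.roots = k := by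
    have h1 := hiter (m - k)
    rw [← hg] at h1
    have h2 := Polynomial.card_roots' g
    rw [hgdeg] at h2
    omega
  have hroots_neg : ∀ r ∈ g.roots, r < 0 := by
    intro r hr
    by_contra hrn
    push_neg at hrn
    have heval : g.eval r = 0 := Polynomial.isRoot_of_mem_roots hr
    have := eval_pos_of_coeff g hcnn hc0 hrn
    rw [heval] at this
    exact lt_irrefl 0 this
  have hfact := Polynomial.C_leadingCoeff_mul_prod_multiset_X_sub_C (p := g) (hgroots.trans hgdeg.symm)
  have hlead : 0 < g.leadingCoeff := by
    rw [Polynomial.leadingCoeff, hgdeg]; exact hck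
  have hprod : (g.roots.map fun a => X - C a).prod = polyOf (g.roots.map fun a => -a) := by
    rw [polyOf, Multiset.map_map]
    apply congrArg
    apply Multiset.map_congr rfl
    intro a _
    simp [sub_eq_add_neg]
  have hcard2 : Multiset.card (g.roots.map fun a => -a) = k := by simp [hgroots]
  have hcoeff1 : (polyOf (g.roots.map fun a => -a)).coeff 1
      = (g.roots.map fun a => -a).esymm (k - 1) := by
    rw [polyOf_coeff _ (by rw [hcard2]; omega), hcard2]
  have hesympos : 0 < (g.roots.map fun a => -a).esymm (k - 1) := by
    apply Multiset.esymm_pos'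
    · intro a ha
      obtain ⟨r, hr, rfl⟩ := Multiset.mem_map.1 ha
      linarith [hroots_neg r hr]
    · rw [hcard2]; omega
  have hfinal : g.coeff 1 = g.leadingCoeff * (g.roots.map fun a => -a).esymm (k - 1) := by
    conv_lhs => rw [← hfact]
    rw [Polynomial.coeff_C_mul, hprod, hcoeff1]
  rw [hc1] at hfinal
  nlinarith [mul_pos hlead hesympos]

lemma polyOf_shift (s : Multiset ℝ) (t : ℝ) :
    polyOf (s.map (· + t)) = Polynomial.taylor t (polyOf s) := by
  unfold polyOf
  induction s using Multiset.induction with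
  | empty => simp
  | cons a s ih =>
    rw [Multiset.map_cons, Multiset.map_cons, Multiset.map_cons, Multiset.prod_cons,
      Multiset.prod_cons, Polynomial.taylor_mul, ← ih]
    congr 1
    rw [Polynomial.taylor_apply]
    simp only [add_comp, X_comp, C_comp, C_add]
    ring

lemma gammaCone_shift {n k : ℕ} (hk : k ≤ n) (lam : Fin n → ℝ) (h : GammaCone k lam)
    {t : ℝ} (ht : 0 ≤ t) : GammaCone k (fun j => lam j + t) := by
  intro j hj1 hjk
  have hjn : j ≤ n := le_trans hjk hk
  set s : Multiset ℝ := Finset.univ.val.map lam with hs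
  have hcard : Multiset.card s = n := by simp [hs]
  have hcard2 : Multiset.card (s.map (· + t)) = n := by simp [hcard]
  have hmap : (Finset.univ.val.map (fun l => lam l + t) : Multiset ℝ) = s.map (· + t) := by
    rw [hs, Multiset.map_map]; rfl
  have h1 : esymm j (fun l => lam l + t) = (polyOf (s.map (· + t))).coeff (n - j) := by
    rw [esymm_eq_multiset, hmap, polyOf_coeff _ (by omega), hcard2]
    congr 1
    omega
  rw [h1, polyOf_shift, Polynomial.taylor_coeff]
  have hesymm_val : ∀ j' : ℕ, j' ≤ n → s.esymm j' = esymm j' lam := by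
    intro j' _
    rw [esymm_eq_multiset]
  apply eval_pos_of_coeff
  · intro l
    rw [Polynomial.hasseDeriv_coeff]
    rcases le_or_gt (l + (n - j)) n with hln | hln
    · rw [polyOf_coeff _ (by omega), hcard, hesymm_val _ (by omega)]
      apply mul_nonneg (by positivity)
      rcases Nat.eq_zero_or_pos (n - (l + (n - j))) with h0 | h1
      · rw [h0, esymm_zero]; norm_num
      · exact le_of_lt (h _ h1 (by omega))
    · rw [Polynomial.coeff_eq_zero_of_natDegree_lt (by rw [polyOf_natDegree, hcard]; omega),
        mul_zero]
  · rw [Polynomial.hasseDeriv_coeff, Nat.zero_add, Nat.choose_self,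
      polyOf_coeff _ (by omega), hcard, hesymm_val _ (by omega)]
    have : n - (n - j) = j := by omega
    rw [this, Nat.cast_one, one_mul]
    exact h j hj1 hjk
  · exact ht

lemma deleteAt_add_const {n : ℕ} (x : Fin n → ℝ) (i : Fin n) (t : ℝ) :
    deleteAt (fun l => x l + t) i = fun j => deleteAt x i j + t := by
  funext j
  unfold deleteAt
  split <;> rfl

lemma main_lemma : ∀ k : ℕ, ∀ n : ℕ, k ≤ n + 1 → ∀ lam : Fin (n + 1) → ℝ, GammaCone k lam →
    ∀ i : Fin (n + 1), GammaCone (k - 1) (deleteAt lam i) := by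
  intro k
  induction k using Nat.strong_induction_on with
  | _ k IH =>
  intro n hkn lam hlam i j hj1 hjk
  rcases lt_or_eq_of_le hjk with hjlt | hjeq
  · exact IH (j + 1) (by omega) n (by omega) lam
      (fun j' h1 h2 => hlam j' h1 (by omega)) i j hj1 (by omega)
  · have hk2 : 2 ≤ k := by omega
    set μ : Fin n → ℝ := deleteAt lam i with hμ
    set f : ℝ → ℝ := fun t => esymm (k - 1) (fun l => μ l + t) with hf
    have hfc : Continuous f := by
      rw [hf]
      unfold esymm
      apply continuous_finset_sum
      intro s _
      apply continuous_finset_prod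
      intro l _
      exact continuous_const.add continuous_id
    set T : ℝ := 1 + ∑ l : Fin n, |μ l| with hT
    have hsumnn : (0:ℝ) ≤ ∑ l : Fin n, |μ l| := Finset.sum_nonneg fun _ _ => abs_nonneg _
    have hTpos : 0 < T := by rw [hT]; linarith
    have habs : ∀ (l : Fin n) (t : ℝ), T ≤ t → 0 < μ l + t := by
      intro l t htT
      have h1 : |μ l| ≤ ∑ l' : Fin n, |μ l'| :=
        Finset.single_le_sum (f := fun l => |μ l|) (fun _ _ => abs_nonneg _) (Finset.mem_univ l)
      have h2 : -|μ l| ≤ μ l := neg_abs_le _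
      rw [hT] at htT
      linarith
    have hfT : ∀ t, T ≤ t → 0 < f t := fun t htT =>
      esymm_pos_of_pos (by omega) _ fun l => habs l t htT
    by_contra hcon
    push_neg at hcon
    have hf0 : f 0 ≤ 0 := by
      have hμ0 : (fun l => μ l + 0) = μ := by funext l; ring
      rw [hf]
      simp only [hμ0]
      rw [← hjeq]
      exact hcon
    set S : Set ℝ := Set.Icc 0 T ∩ f ⁻¹' Set.Iic 0 with hS
    have hSne : S.Nonempty := ⟨0, ⟨le_refl 0, le_of_lt hTpos⟩, hf0⟩
    have hSc : IsClosed S := isClosed_Icc.inter (isClosed_Iic.preimage hfc)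
    have hSbdd : BddAbove S := ⟨T, fun t ht => ht.1.2⟩
    set t0 := sSup S with ht0
    have ht0S : t0 ∈ S := hSc.csSup_mem hSne hSbdd
    obtain ⟨⟨ht00, ht0T⟩, hft0⟩ := ht0S
    have hright : ∀ t, t0 < t → 0 < f t := by
      intro t ht
      rcases le_or_gt t T with h | h
      · by_contra hc
        push_neg at hc
        have htS : t ∈ S := ⟨⟨by linarith, h⟩, hc⟩
        have := le_csSup hSbdd htS
        rw [← ht0] at this
        linarith
      · exact hfT t (le_of_lt h)
    have hft0' : 0 ≤ f t0 := by
      by_contra hc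
      push_neg at hc
      have hopen : IsOpen {t | f t < 0} := isOpen_lt hfc continuous_const
      obtain ⟨ε, hε, hball⟩ := Metric.isOpen_iff.1 hopen t0 hc
      have hmem : (t0 + ε / 2) ∈ Metric.ball t0 ε := by
        simp only [Metric.mem_ball, Real.dist_eq]
        rw [abs_of_pos (by linarith)]
        linarith
      have h1 : f (t0 + ε / 2) < 0 := hball hmem
      have h2 := hright (t0 + ε / 2) (by linarith)
      linarith
    have hft0z : f t0 = 0 := le_antisymm hft0 hft0'
    set ν : Fin (n + 1) → ℝ := fun l => lam l + t0 with hν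
    have hνG : GammaCone k ν := gammaCone_shift hkn lam hlam ht00
    have hdel : deleteAt ν i = fun l => μ l + t0 := by
      rw [hν, deleteAt_add_const]
      rfl
    have hlow : ∀ j', 1 ≤ j' → j' ≤ k - 2 → 0 < esymm j' (fun l => μ l + t0) := by
      intro j' h1 h2
      have := IH (k - 1) (by omega) n (by omega) ν
        (fun a b c => hνG a b (by omega)) i j' h1 (by omega)
      rwa [hdel] at this
    have hkm1 : esymm (k - 1) (fun l => μ l + t0) = 0 := hft0z
    have hνk : 0 < esymm k ν := hνG k (by omega) le_rfl
    have hkdel : 0 < esymm k (fun l => μ l + t0) := by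
      have hid := esymm_delete ν i (k - 1)
      rw [hdel, hkm1, mul_zero, add_zero] at hid
      have hkk : k - 1 + 1 = k := by omega
      rw [hkk] at hid
      rw [← hid]
      exact hνk
    rcases Nat.lt_or_ge n k with hnk | hnk
    · rw [esymm_eq_zero_of_lt hnk (fun l => μ l + t0)] at hkdel
      exact lt_irrefl 0 hkdel
    · exact key_contradiction hk2 hnk (fun l => μ l + t0)
        (fun j' h1 h2 => by
          rcases Nat.lt_or_ge j' (k - 1) with h | h
          · exact le_of_lt (hlow j' h1 (by omega))
          · have : j' = k - 1 := by omega
            rw [this, hkm1])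
        hkm1 hkdel

/-- deleting a coordinate of a vector in `Γ_k ⊂ ℝⁿ` lands in
`Γ_{k-1} ⊂ ℝ^{n-1}`; in particular `σ_{k-1}` of the deleted vector is positive. -/
theorem deleteAt_mem_gardingCone (n k : ℕ) (hn : 2 ≤ n) (hk2 : 2 ≤ k) (hkn : k ≤ n)
    (lam : Fin n → ℝ) (hlam : GammaCone k lam) (i : Fin n) :
    GammaCone (k - 1) (deleteAt lam i) ∧ 0 < esymm (k - 1) (deleteAt lam i) := by
  obtain ⟨m, rfl⟩ : ∃ m, n = m + 1 := ⟨n - 1, by omega⟩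
  have hG := main_lemma k m (by omega) lam hlam i
  exact ⟨hG, hG (k - 1) (by omega) le_rfl⟩
end

section
/- Let n ≥ 2, 1 ≤ α ≤ n−1, and ψ > 0, δ > 0 real numbers. Suppose λ, μ ∈ ℝ^n have all coordinates positive and satisfy, for every index 1 ≤ i ≤ n, n·σ_{n−1}(λ\^i) ≥ (1+δ)^{α}·(n−α)·ψ·σ_{n−α−1}(λ\^i) and n·σ_{n−1}(μ\^i) ≥ (n−α)·ψ·σ_{n−α−1}(μ\^i). Then for every t ∈ [0,1] and every index i, the vector λ_t = (1−t)λ + tμ satisfies n·σ_{n−1}(λ_t\^i) − (n−α)·ψ·σ_{n−α−1}(λ_t\^i) ≥ n·(1 − (1+δ−δt)^{−α})·σ_{n−1}(λ_t\^i). (This is the pointwise inequality (3.12) of the paper used for the complex Monge–Ampère type equation on Hermitian manifolds.) -/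
/-!
For positive `x ∈ ℝᵐ` one has `σ_{m-α}(x) = σ_m(x) · σ_α(x⁻¹)`, and `σ_α(x⁻¹)` is a sum of
products `∏ 1/xᵢ`, each convex on the positive orthant by weighted AM–GM. Hence, for `c ≥ 0`,
the set of positive `x` with `c σ_{m-α}(x) ≤ A σ_m(x)` is convex. By homogeneity the hypothesis
on `λ` says that `λ/(1+δ)` lies in this set, and `(1-t)λ + tμ` is `s = 1+δ-δt` times a convex
combination of `λ/(1+δ)` and `μ`; undoing the scaling by `s` produces the factor `s^{-α}`.
-/

open Finset

theorem ConvexOn.finset_sum {𝕜 E β ι : Type*} [Semiring 𝕜] [PartialOrder 𝕜] [AddCommMonoid E]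
    [AddCommMonoid β] [PartialOrder β] [IsOrderedAddMonoid β] [SMul 𝕜 E] [Module 𝕜 β]
    {s : Set E} (hs : Convex 𝕜 s) {t : Finset ι} {f : ι → E → β}
    (hf : ∀ i ∈ t, ConvexOn 𝕜 s (f i)) : ConvexOn 𝕜 s fun x => ∑ i ∈ t, f i x := by
  simpa only [sum_fn] using
    sum_induction f (ConvexOn 𝕜 s) (fun _ _ => ConvexOn.add) (convexOn_const (0 : β) hs) hf

theorem esymm_smul {m : ℕ} (k : ℕ) (r : ℝ) (x : Fin m → ℝ) :
    esymm k (r • x) = r ^ k * esymm k x := by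
  rw [esymm, esymm, mul_sum]
  refine sum_congr rfl fun s hs => ?_
  simp only [Pi.smul_apply, smul_eq_mul, prod_mul_distrib, prod_const,
    (mem_powersetCard.mp hs).2]

theorem esymm_self {m : ℕ} (x : Fin m → ℝ) : esymm m x = ∏ i, x i := by
  have h := powersetCard_self (univ : Finset (Fin m))
  rw [card_univ, Fintype.card_fin] at h
  rw [esymm, h, sum_singleton]

theorem esymm_sub_eq_prod_mul_esymm_inv {m α : ℕ} (hα : α ≤ m) {x : Fin m → ℝ}
    (hx : ∀ i, x i ≠ 0) :
    esymm (m - α) x = (∏ i, x i) * esymm α fun i => (x i)⁻¹ := by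
  rw [esymm, esymm, mul_sum]
  refine sum_nbij' compl compl (fun S hS => ?_) (fun T hT => ?_) (fun S _ => compl_compl S)
    (fun T _ => compl_compl T) (fun S _ => ?_)
  · simp only [mem_powersetCard, subset_univ, true_and, card_compl, Fintype.card_fin] at hS ⊢
    omega
  · simp only [mem_powersetCard, subset_univ, true_and, card_compl, Fintype.card_fin] at hT ⊢
    omega
  · rw [prod_inv_distrib, ← prod_mul_prod_compl S x, mul_assoc,
      mul_inv_cancel₀ (prod_ne_zero_iff.mpr fun i _ => hx i), mul_one]

theorem convexOn_prod_inv {ι : Type*} (T : Finset ι) :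
    ConvexOn ℝ (Set.univ.pi fun _ => Set.Ioi 0) fun x : ι → ℝ => ∏ i ∈ T, (x i)⁻¹ := by
  refine ⟨convex_pi fun _ _ => convex_Ioi 0, fun u hu v hv a b ha hb hab => ?_⟩
  simp only [Set.mem_univ_pi, Set.mem_Ioi] at hu hv
  simp only [Pi.add_apply, Pi.smul_apply, smul_eq_mul, prod_inv_distrib]
  have hPu : 0 < ∏ i ∈ T, u i := prod_pos fun i _ => hu i
  have hPv : 0 < ∏ i ∈ T, v i := prod_pos fun i _ => hv i
  have hgm : (∏ i ∈ T, u i) ^ a * (∏ i ∈ T, v i) ^ b ≤ ∏ i ∈ T, (a * u i + b * v i) := by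
    rw [← Real.finsetProd_rpow T u (fun i _ => (hu i).le),
      ← Real.finsetProd_rpow T v (fun i _ => (hv i).le), ← prod_mul_distrib]
    exact prod_le_prod
      (fun i _ => mul_nonneg (Real.rpow_nonneg (hu i).le a) (Real.rpow_nonneg (hv i).le b))
      fun i _ => Real.geom_mean_le_arith_mean2_weighted ha hb (hu i).le (hv i).le hab
  calc (∏ i ∈ T, (a * u i + b * v i))⁻¹
      ≤ ((∏ i ∈ T, u i) ^ a * (∏ i ∈ T, v i) ^ b)⁻¹ := inv_anti₀ (by positivity) hgm
    _ = (∏ i ∈ T, u i)⁻¹ ^ a * (∏ i ∈ T, v i)⁻¹ ^ b := by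
      rw [mul_inv, Real.inv_rpow hPu.le, Real.inv_rpow hPv.le]
    _ ≤ a * (∏ i ∈ T, u i)⁻¹ + b * (∏ i ∈ T, v i)⁻¹ :=
      Real.geom_mean_le_arith_mean2_weighted ha hb (by positivity) (by positivity) hab

theorem convexOn_esymm_inv {m : ℕ} (k : ℕ) :
    ConvexOn ℝ (Set.univ.pi fun _ => Set.Ioi 0) fun x : Fin m → ℝ => esymm k fun i => (x i)⁻¹ :=
  ConvexOn.finset_sum (convex_pi fun _ _ => convex_Ioi 0) fun T _ => convexOn_prod_inv T

theorem convex_setOf_mul_esymm_sub_le {m α : ℕ} (hα : α ≤ m) (A : ℝ) {c : ℝ} (hc : 0 ≤ c) :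
    Convex ℝ {x : Fin m → ℝ | x ∈ Set.univ.pi (fun _ => Set.Ioi 0) ∧
      c * esymm (m - α) x ≤ A * esymm m x} := by
  refine (Set.sep_ext_iff.mpr fun x hx => ?_) ▸ ((convexOn_esymm_inv α).smul hc).convex_le A
  simp only [Set.mem_univ_pi, Set.mem_Ioi] at hx
  rw [esymm_sub_eq_prod_mul_esymm_inv hα fun i => (hx i).ne', esymm_self, smul_eq_mul,
    mul_left_comm, mul_comm A, mul_le_mul_iff_right₀ (prod_pos fun i _ => hx i)]

theorem mul_esymm_sub_smul_le_iff {m α : ℕ} (hα : α ≤ m) (A c : ℝ) {r : ℝ} (hr : 0 < r)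
    (x : Fin m → ℝ) :
    c * esymm (m - α) (r • x) ≤ A * esymm m (r • x) ↔
      c * esymm (m - α) x ≤ r ^ α * (A * esymm m x) := by
  have hpow : r ^ m = r ^ (m - α) * r ^ α := by rw [← pow_add, Nat.sub_add_cancel hα]
  rw [esymm_smul, esymm_smul, hpow, mul_left_comm, mul_left_comm A, mul_assoc,
    mul_le_mul_iff_right₀ (pow_pos hr _), mul_left_comm]

theorem mul_esymm_sub_le_of_convex_combination {m α : ℕ} (hα : α ≤ m) (A : ℝ) {c δ t : ℝ}
    (hc : 0 ≤ c) (hδ : -1 < δ) (ht0 : 0 ≤ t) (ht1 : t ≤ 1) {x y z : Fin m → ℝ}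
    (hx : ∀ k, 0 < x k) (hy : ∀ k, 0 < y k) (hz : ∀ k, z k = (1 - t) * x k + t * y k)
    (hxc : (1 + δ) ^ α * (c * esymm (m - α) x) ≤ A * esymm m x)
    (hyc : c * esymm (m - α) y ≤ A * esymm m y) :
    c * esymm (m - α) z ≤ ((1 + δ - δ * t) ^ α)⁻¹ * (A * esymm m z) := by
  have hd : 0 < 1 + δ := by linarith
  have hs : 0 < 1 + δ - δ * t := by
    have h := convex_Ioi (0 : ℝ) hd (Set.mem_Ioi.2 one_pos) (sub_nonneg.2 ht1) ht0
      (sub_add_cancel 1 t)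
    rw [Set.mem_Ioi, smul_eq_mul, smul_eq_mul] at h
    linear_combination h
  set S := {w : Fin m → ℝ | w ∈ Set.univ.pi (fun _ => Set.Ioi 0) ∧
    c * esymm (m - α) w ≤ A * esymm m w}
  have hxS : (1 + δ)⁻¹ • x ∈ S :=
    ⟨fun k _ => mul_pos (inv_pos.2 hd) (hx k),
      (mul_esymm_sub_smul_le_iff hα A c (inv_pos.2 hd) x).2 <| by
        rwa [inv_pow, le_inv_mul_iff₀ (pow_pos hd α)]⟩
  have hyS : y ∈ S := ⟨fun k _ => hy k, hyc⟩
  have hzS : (1 + δ - δ * t)⁻¹ • z ∈ S := by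
    have hcomb : (1 + δ - δ * t)⁻¹ • z =
        ((1 - t) * (1 + δ) / (1 + δ - δ * t)) • ((1 + δ)⁻¹ • x) + (t / (1 + δ - δ * t)) • y := by
      ext k
      simp only [Pi.add_apply, Pi.smul_apply, smul_eq_mul, hz]
      field_simp
    rw [hcomb]
    exact convex_setOf_mul_esymm_sub_le hα A hc hxS hyS
      (div_nonneg (mul_nonneg (by linarith) hd.le) hs.le) (div_nonneg ht0 hs.le)
      (by rw [← add_div, div_eq_one_iff_eq hs.ne']; ring)
  rw [← inv_pow]
  exact (mul_esymm_sub_smul_le_iff hα A c (inv_pos.2 hs) z).1 hzS.2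

theorem deleteAt_map₂ {n : ℕ} (f : ℝ → ℝ → ℝ) (x y : Fin n → ℝ) (i : Fin n) (k : Fin (n - 1)) :
    deleteAt (fun j => f (x j) (y j)) i k = f (deleteAt x i k) (deleteAt y i k) := by
  unfold deleteAt
  split <;> rfl

theorem deleteAt_pos {n : ℕ} {x : Fin n → ℝ} (hx : ∀ j, 0 < x j) (i : Fin n) (k : Fin (n - 1)) :
    0 < deleteAt x i k := by
  unfold deleteAt
  split <;> exact hx _

theorem monge_ampere_type_pointwise_general (n α : ℕ) (hαn : α ≤ n - 1)
    (ψ δ : ℝ) (hψ : 0 < ψ) (hδ : 0 < δ)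
    (lam mu : Fin n → ℝ) (hlam : ∀ i, 0 < lam i) (hmu : ∀ i, 0 < mu i)
    (hlamc : ∀ i : Fin n,
      (n : ℝ) * esymm (n - 1) (deleteAt lam i) ≥
        (1 + δ) ^ α * (((n : ℝ) - (α : ℝ)) * ψ * esymm (n - α - 1) (deleteAt lam i)))
    (hmuc : ∀ i : Fin n,
      (n : ℝ) * esymm (n - 1) (deleteAt mu i) ≥
        ((n : ℝ) - (α : ℝ)) * ψ * esymm (n - α - 1) (deleteAt mu i))
    (t : ℝ) (ht0 : 0 ≤ t) (ht1 : t ≤ 1) (i : Fin n) :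
    (n : ℝ) * esymm (n - 1) (deleteAt (fun j => (1 - t) * lam j + t * mu j) i) -
        ((n : ℝ) - (α : ℝ)) * ψ *
          esymm (n - α - 1) (deleteAt (fun j => (1 - t) * lam j + t * mu j) i) ≥
      (n : ℝ) * (1 - ((1 + δ - δ * t) ^ α)⁻¹) *
        esymm (n - 1) (deleteAt (fun j => (1 - t) * lam j + t * mu j) i) := by
  simp only [Nat.sub_right_comm n α 1] at hlamc hmuc ⊢
  have hc : 0 ≤ ((n : ℝ) - α) * ψ :=
    mul_nonneg (sub_nonneg.2 (Nat.cast_le.2 (hαn.trans (Nat.sub_le n 1)))) hψ.le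
  have hinterp := mul_esymm_sub_le_of_convex_combination hαn (n : ℝ) hc (by linarith) ht0 ht1
    (deleteAt_pos hlam i) (deleteAt_pos hmu i)
    (deleteAt_map₂ (fun a b => (1 - t) * a + t * b) lam mu i) (hlamc i) (hmuc i)
  linear_combination hinterp

/-- the pointwise inequality (3.12) of the paper,
used for the complex Monge–Ampère type equation on Hermitian manifolds. -/
theorem monge_ampere_type_pointwise (n α : ℕ) (hn : 2 ≤ n) (hα1 : 1 ≤ α) (hαn : α ≤ n - 1)
    (ψ δ : ℝ) (hψ : 0 < ψ) (hδ : 0 < δ)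
    (lam mu : Fin n → ℝ) (hlam : ∀ i, 0 < lam i) (hmu : ∀ i, 0 < mu i)
    (hlamc : ∀ i : Fin n,
      (n : ℝ) * esymm (n - 1) (deleteAt lam i) ≥
        (1 + δ) ^ α * (((n : ℝ) - (α : ℝ)) * ψ * esymm (n - α - 1) (deleteAt lam i)))
    (hmuc : ∀ i : Fin n,
      (n : ℝ) * esymm (n - 1) (deleteAt mu i) ≥
        ((n : ℝ) - (α : ℝ)) * ψ * esymm (n - α - 1) (deleteAt mu i))
    (t : ℝ) (ht0 : 0 ≤ t) (ht1 : t ≤ 1) (i : Fin n) :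
    (n : ℝ) * esymm (n - 1) (deleteAt (fun j => (1 - t) * lam j + t * mu j) i) -
        ((n : ℝ) - (α : ℝ)) * ψ *
          esymm (n - α - 1) (deleteAt (fun j => (1 - t) * lam j + t * mu j) i) ≥
      (n : ℝ) * (1 - ((1 + δ - δ * t) ^ α)⁻¹) *
        esymm (n - 1) (deleteAt (fun j => (1 - t) * lam j + t * mu j) i) :=
  monge_ampere_type_pointwise_general n α hαn ψ δ hψ hδ lam mu hlam hmu hlamc hmuc t ht0 ht1 i
end

section
/- Let n ≥ 2 and 1 ≤ α ≤ n. Let A and B be n×n complex Hermitian positive definite matrices and t ∈ [0,1]; set C = (1−t)A + tB (also Hermitian positive definite). Then (σ_n(eig C)/σ_{n−α}(eig C))^{1/α} ≥ (1−t)·(σ_n(eig A)/σ_{n−α}(eig A))^{1/α} + t·(σ_n(eig B)/σ_{n−α}(eig B))^{1/α}. (This is the matrix-level concavity of the (n, n−α)-quotient operator governing equation (1.5) of the paper.) -/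
open scoped ComplexOrder

/-!
Write `q(M) = σ_n(eig M) / σ_{n-α}(eig M)`. Since `σ_k(eig M)` is the sum of the principal
`k × k` minors of `M`, and `det M = det M_s · det S_s(M)` where `S_s(M)` is the Schur complement
of the principal block on `s`, we get `q(M) = (∑_{|s| = n-α} (det S_s(M))⁻¹)⁻¹`, each `S_s(M)`
being an `α × α` matrix. The Schur complement is superadditive in the Loewner order (it is a
minimum of quadratic forms), and `det^{1/α}` is superadditive and monotone on positive matrices
(Minkowski's determinant inequality), so each `(det S_s)^{1/α}` is superadditive. The map
`a ↦ (∑ (a_s ^ α)⁻¹)^{-1/α}` is monotone and superadditive by convexity of `x ↦ x⁻ᵅ`, hence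
`q^{1/α}` is superadditive; being positively homogeneous of degree one, it is concave.
-/

open Finset
open scoped MatrixOrder

theorem Real.geom_mean_add_geom_mean_le_weighted {ι : Type*} (s : Finset ι) {w z₁ z₂ : ι → ℝ}
    (hw : ∀ i ∈ s, 0 ≤ w i) (hw' : ∑ i ∈ s, w i = 1) (hz₁ : ∀ i ∈ s, 0 < z₁ i)
    (hz₂ : ∀ i ∈ s, 0 ≤ z₂ i) :
    ∏ i ∈ s, z₁ i ^ w i + ∏ i ∈ s, z₂ i ^ w i ≤ ∏ i ∈ s, (z₁ i + z₂ i) ^ w i := by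
  have hz : ∀ i ∈ s, 0 < z₁ i + z₂ i := fun i hi => add_pos_of_pos_of_nonneg (hz₁ i hi) (hz₂ i hi)
  have h₁ := geom_mean_le_arith_mean_weighted s w (fun i => z₁ i / (z₁ i + z₂ i)) hw hw'
    fun i hi => (div_pos (hz₁ i hi) (hz i hi)).le
  have h₂ := geom_mean_le_arith_mean_weighted s w (fun i => z₂ i / (z₁ i + z₂ i)) hw hw'
    fun i hi => div_nonneg (hz₂ i hi) (hz i hi).le
  have hsum :
      ∑ i ∈ s, w i * (z₁ i / (z₁ i + z₂ i)) + ∑ i ∈ s, w i * (z₂ i / (z₁ i + z₂ i)) = 1 := by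
    rw [← sum_add_distrib, ← hw']
    refine sum_congr rfl fun i hi => ?_
    rw [← mul_add, ← add_div, div_self (hz i hi).ne', mul_one]
  have hprod : ∀ z : ι → ℝ, (∀ i ∈ s, 0 ≤ z i) → ∏ i ∈ s, (z i / (z₁ i + z₂ i)) ^ w i =
      (∏ i ∈ s, z i ^ w i) / ∏ i ∈ s, (z₁ i + z₂ i) ^ w i := fun z hz' => by
    rw [← prod_div_distrib]
    exact prod_congr rfl fun i hi => Real.div_rpow (hz' i hi) (hz i hi).le _
  rw [hprod z₁ fun i hi => (hz₁ i hi).le] at h₁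
  rw [hprod z₂ hz₂] at h₂
  have hpos : 0 < ∏ i ∈ s, (z₁ i + z₂ i) ^ w i :=
    prod_pos fun i hi => Real.rpow_pos_of_pos (hz i hi) _
  rw [← div_le_one hpos, add_div]
  linarith

theorem inv_add_pow_le {x y p q : ℝ} (k : ℕ) (hx : 0 < x) (hy : 0 < y) (hp : 0 < p)
    (hq : 0 < q) (hpq : p + q = 1) :
    ((x + y) ^ k)⁻¹ ≤ p ^ (k + 1) * (x ^ k)⁻¹ + q ^ (k + 1) * (y ^ k)⁻¹ := by
  have h := (convexOn_zpow (𝕜 := ℝ) (-k)).2 (Set.mem_Ioi.mpr (div_pos hx hp))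
    (Set.mem_Ioi.mpr (div_pos hy hq)) hp.le hq.le hpq
  simp only [smul_eq_mul, zpow_neg, zpow_natCast, mul_div_cancel₀ _ hp.ne',
    mul_div_cancel₀ _ hq.ne'] at h
  refine h.trans_eq ?_
  rw [div_pow, div_pow, inv_div, inv_div, pow_succ, pow_succ]
  field_simp

theorem inv_sum_inv_rpow_add_le_of_rpow_add_le {ι : Type*} (s : Finset ι) {k : ℕ} (hk : k ≠ 0)
    {a b c : ι → ℝ} (ha : ∀ i ∈ s, 0 < a i) (hb : ∀ i ∈ s, 0 < b i) (hc₀ : ∀ i ∈ s, 0 < c i)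
    (hc : ∀ i ∈ s, a i ^ (k⁻¹ : ℝ) + b i ^ (k⁻¹ : ℝ) ≤ c i ^ (k⁻¹ : ℝ)) :
    (∑ i ∈ s, (a i)⁻¹)⁻¹ ^ (k⁻¹ : ℝ) + (∑ i ∈ s, (b i)⁻¹)⁻¹ ^ (k⁻¹ : ℝ) ≤
      (∑ i ∈ s, (c i)⁻¹)⁻¹ ^ (k⁻¹ : ℝ) := by
  rcases s.eq_empty_or_nonempty with rfl | hs
  · simp [hk]
  have hroot : ∀ z : ℝ, 0 ≤ z → (z ^ (k⁻¹ : ℝ)) ^ k = z := fun z hz =>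
    Real.rpow_inv_natCast_pow hz hk
  have hsum_pos : ∀ z : ι → ℝ, (∀ i ∈ s, 0 < z i) → 0 < ∑ i ∈ s, (z i)⁻¹ :=
    fun z hz => sum_pos (fun i hi => inv_pos.mpr (hz i hi)) hs
  set A := (∑ i ∈ s, (a i)⁻¹)⁻¹ ^ (k⁻¹ : ℝ)
  set B := (∑ i ∈ s, (b i)⁻¹)⁻¹ ^ (k⁻¹ : ℝ)
  have hA : 0 < A := by have := hsum_pos a ha; positivity
  have hB : 0 < B := by have := hsum_pos b hb; positivity
  have hAk : ∑ i ∈ s, (a i)⁻¹ = (A ^ k)⁻¹ := by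
    rw [hroot _ (inv_nonneg.mpr (hsum_pos a ha).le), inv_inv]
  have hBk : ∑ i ∈ s, (b i)⁻¹ = (B ^ k)⁻¹ := by
    rw [hroot _ (inv_nonneg.mpr (hsum_pos b hb).le), inv_inv]
  -- the weights `A / (A + B)` and `B / (A + B)` make the convexity bound sharp after summing
  have hsum : ∑ i ∈ s, (c i)⁻¹ ≤ ((A + B) ^ k)⁻¹ := calc
    ∑ i ∈ s, (c i)⁻¹ ≤ ∑ i ∈ s, ((a i ^ (k⁻¹ : ℝ) + b i ^ (k⁻¹ : ℝ)) ^ k)⁻¹ :=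
      sum_le_sum fun i hi => by
        have := ha i hi; have := hb i hi
        rw [← hroot (c i) (hc₀ i hi).le]
        gcongr
        exact hc i hi
    _ ≤ ∑ i ∈ s, ((A / (A + B)) ^ (k + 1) * (a i)⁻¹ + (B / (A + B)) ^ (k + 1) * (b i)⁻¹) :=
      sum_le_sum fun i hi => by
        simpa only [hroot _ (ha i hi).le, hroot _ (hb i hi).le] using
          inv_add_pow_le k (Real.rpow_pos_of_pos (ha i hi) (k⁻¹ : ℝ))
            (Real.rpow_pos_of_pos (hb i hi) (k⁻¹ : ℝ)) (div_pos hA (add_pos hA hB))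
            (div_pos hB (add_pos hA hB)) (by field_simp)
    _ = ((A + B) ^ k)⁻¹ := by
      rw [sum_add_distrib, ← mul_sum, ← mul_sum, hAk, hBk, div_pow, div_pow, pow_succ, pow_succ]
      field_simp
      ring
  calc A + B = ((A + B) ^ k) ^ (k⁻¹ : ℝ) := (Real.pow_rpow_inv_natCast (by positivity) hk).symm
    _ ≤ (∑ i ∈ s, (c i)⁻¹)⁻¹ ^ (k⁻¹ : ℝ) := by
      refine Real.rpow_le_rpow (by positivity) ?_ (by positivity)
      exact (le_inv_comm₀ (by positivity) (hsum_pos c hc₀)).mpr hsum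

namespace Matrix

variable {ι m p 𝕜 : Type*} [RCLike 𝕜]

section Minkowski

variable [Fintype ι] [DecidableEq ι]

theorem IsHermitian.det_eq_ofReal_prod_eigenvalues {M : Matrix ι ι 𝕜} (hM : M.IsHermitian) :
    M.det = ((∏ i, hM.eigenvalues i : ℝ) : 𝕜) := by
  rw [hM.det_eq_prod_eigenvalues, RCLike.ofReal_prod]

theorem IsHermitian.det_one_add {G : Matrix ι ι 𝕜} (hG : G.IsHermitian) :
    (1 + G).det = ((∏ i, (1 + hG.eigenvalues i) : ℝ) : 𝕜) := by
  have hU := hG.eigenvectorUnitary.2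
  conv_lhs => rw [hG.spectral_theorem, ← map_one (Unitary.conjStarAlgAut 𝕜 _ _), ← map_add,
    Unitary.conjStarAlgAut_apply, det_conj_of_mul_eq_one (Unitary.mul_star_self_of_mem hU)
      (Unitary.star_mul_self_of_mem hU), ← diagonal_one, diagonal_add, det_diagonal]
  push_cast
  rfl

theorem PosSemidef.re_det_nonneg {M : Matrix ι ι 𝕜} (hM : M.PosSemidef) : 0 ≤ RCLike.re M.det :=
  (RCLike.nonneg_iff.mp hM.det_nonneg).1

/-- Minkowski's determinant inequality. Writing `X = Tᴴ T`, we have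
`det (X + F) = det X * det (1 + G)` and `det F = det X * det G` with `G = T⁻ᴴ F T⁻¹ ⪰ 0`,
which reduces it to the weighted AM-GM bound `1 + (∏ ν)^(1/k) ≤ (∏ (1 + ν))^(1/k)` on the
eigenvalues `ν` of `G`. -/
theorem PosDef.re_det_rpow_add_le [Nonempty ι] {X F : Matrix ι ι 𝕜} (hX : X.PosDef)
    (hF : F.PosSemidef) :
    RCLike.re X.det ^ (Fintype.card ι : ℝ)⁻¹ + RCLike.re F.det ^ (Fintype.card ι : ℝ)⁻¹ ≤
      RCLike.re (X + F).det ^ (Fintype.card ι : ℝ)⁻¹ := by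
  obtain ⟨T, hT, rfl⟩ :=
    CStarAlgebra.isStrictlyPositive_iff_eq_star_mul_self.mp hX.isStrictlyPositive
  have hTinv : T⁻¹ * T = 1 := nonsing_inv_mul T ((isUnit_iff_isUnit_det T).mp hT)
  set G := (T⁻¹)ᴴ * F * T⁻¹
  have hG : G.PosSemidef := hF.conjTranspose_mul_mul_same T⁻¹
  have hF_eq : F = star T * G * T := by
    simp only [G, star_eq_conjTranspose, ← Matrix.mul_assoc, ← conjTranspose_mul, hTinv,
      conjTranspose_one, Matrix.one_mul]
    rw [Matrix.mul_assoc, hTinv, Matrix.mul_one]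
  have hdet : ∀ M, (star T * M * T).det = (star T * T).det * M.det := fun M => by
    simp only [det_mul]
    ring
  have hdetF : F.det = (star T * T).det * G.det := by rw [hF_eq, hdet]
  have hdetXF : (star T * T + F).det = (star T * T).det * (1 + G).det := by
    rw [← hdet, hF_eq, Matrix.mul_add, Matrix.add_mul, Matrix.mul_one]
  set c : ℝ := (Fintype.card ι : ℝ)⁻¹
  set d := ∏ i, hX.1.eigenvalues i
  have hd : 0 < d := prod_pos fun i _ => hX.eigenvalues_pos i
  have hν := hG.eigenvalues_nonneg
  have hν₁ : ∀ i, 0 ≤ 1 + hG.1.eigenvalues i := fun i => add_nonneg zero_le_one (hν i)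
  have hamgm := Real.geom_mean_add_geom_mean_le_weighted univ (w := fun _ => c)
    (z₁ := fun _ => 1) (z₂ := hG.1.eigenvalues) (fun _ _ => by positivity) (by simp [c])
    (fun _ _ => one_pos) fun i _ => hν i
  simp only [Real.one_rpow, prod_const_one] at hamgm
  rw [Real.finsetProd_rpow _ _ fun i _ => hν i, Real.finsetProd_rpow _ _ fun i _ => hν₁ i] at hamgm
  rw [hdetF, hdetXF, hX.1.det_eq_ofReal_prod_eigenvalues, hG.1.det_one_add,
    hG.1.det_eq_ofReal_prod_eigenvalues]
  simp only [← RCLike.ofReal_mul, RCLike.ofReal_re]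
  rw [Real.mul_rpow hd.le (prod_nonneg fun i _ => hν i),
    Real.mul_rpow hd.le (prod_nonneg fun i _ => hν₁ i), ← mul_one_add]
  gcongr

theorem PosDef.re_det_rpow_add_le_of_add_le [Nonempty ι] {X Y Z : Matrix ι ι 𝕜} (hX : X.PosDef)
    (hY : Y.PosDef) (hXYZ : X + Y ≤ Z) :
    RCLike.re X.det ^ (Fintype.card ι : ℝ)⁻¹ + RCLike.re Y.det ^ (Fintype.card ι : ℝ)⁻¹ ≤
      RCLike.re Z.det ^ (Fintype.card ι : ℝ)⁻¹ := by
  have hE : (Z - (X + Y)).PosSemidef := hXYZ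
  have hXY := hX.re_det_rpow_add_le (hY.posSemidef.add hE)
  have hYE := hY.re_det_rpow_add_le hE
  have hE₀ := Real.rpow_nonneg hE.re_det_nonneg (Fintype.card ι : ℝ)⁻¹
  rw [show X + (Y + (Z - (X + Y))) = Z by abel] at hXY
  linarith

end Minkowski

section Schur

theorem IsHermitian.toBlocks₂₁_eq {W : Matrix (m ⊕ p) (m ⊕ p) 𝕜} (hW : W.IsHermitian) :
    W.toBlocks₂₁ = W.toBlocks₁₂ᴴ := by
  conv_lhs => rw [← hW.eq]
  rfl

theorem PosDef.toBlocks₁₁ {W : Matrix (m ⊕ p) (m ⊕ p) 𝕜} (hW : W.PosDef) :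
    W.toBlocks₁₁.PosDef :=
  hW.submatrix Sum.inl_injective

variable [Fintype m] [DecidableEq m]

noncomputable def schurCompl {R : Type*} [CommRing R] (W : Matrix (m ⊕ p) (m ⊕ p) R) :
    Matrix p p R :=
  W.toBlocks₂₂ - W.toBlocks₂₁ * W.toBlocks₁₁⁻¹ * W.toBlocks₁₂

variable [Fintype p] {W W₁ W₂ : Matrix (m ⊕ p) (m ⊕ p) 𝕜}

theorem PosDef.dotProduct_mulVec_sumElim (hW : W.PosDef) (u : m → 𝕜) (x : p → 𝕜) :
    star (u ⊕ᵥ x) ⬝ᵥ (W *ᵥ (u ⊕ᵥ x)) =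
      star (u + (W.toBlocks₁₁⁻¹ * W.toBlocks₁₂) *ᵥ x) ⬝ᵥ
          (W.toBlocks₁₁ *ᵥ (u + (W.toBlocks₁₁⁻¹ * W.toBlocks₁₂) *ᵥ x)) +
        star x ⬝ᵥ (W.schurCompl *ᵥ x) := by
  have := hW.toBlocks₁₁.isUnit.invertible
  have h := schur_complement_eq₁₁ W.toBlocks₁₂ W.toBlocks₂₂ u x hW.toBlocks₁₁.1
  rw [← hW.1.toBlocks₂₁_eq, fromBlocks_toBlocks] at h
  simp only [dotProduct_mulVec] at h ⊢
  exact h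

theorem PosDef.dotProduct_schurCompl_mulVec_le (hW : W.PosDef) (u : m → 𝕜) (x : p → 𝕜) :
    star x ⬝ᵥ (W.schurCompl *ᵥ x) ≤ star (u ⊕ᵥ x) ⬝ᵥ (W *ᵥ (u ⊕ᵥ x)) := by
  rw [hW.dotProduct_mulVec_sumElim]
  exact le_add_of_nonneg_left (hW.toBlocks₁₁.posSemidef.dotProduct_mulVec_nonneg _)

theorem PosDef.exists_dotProduct_schurCompl_mulVec_eq (hW : W.PosDef) (x : p → 𝕜) :
    ∃ u, star x ⬝ᵥ (W.schurCompl *ᵥ x) = star (u ⊕ᵥ x) ⬝ᵥ (W *ᵥ (u ⊕ᵥ x)) :=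
  ⟨-((W.toBlocks₁₁⁻¹ * W.toBlocks₁₂) *ᵥ x), by simp [hW.dotProduct_mulVec_sumElim]⟩

theorem PosDef.schurCompl (hW : W.PosDef) : W.schurCompl.PosDef := by
  have := hW.toBlocks₁₁.isUnit.invertible
  have hS : W.schurCompl.PosSemidef := by
    rw [Matrix.schurCompl, hW.1.toBlocks₂₁_eq, ← PosDef.fromBlocks₁₁ _ _ hW.toBlocks₁₁,
      ← hW.1.toBlocks₂₁_eq, fromBlocks_toBlocks]
    exact hW.posSemidef
  refine .of_dotProduct_mulVec_pos hS.1 fun x hx => ?_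
  obtain ⟨u, hu⟩ := hW.exists_dotProduct_schurCompl_mulVec_eq x
  rw [hu]
  exact hW.dotProduct_mulVec_pos fun h => hx (by simpa using congr_arg (· ∘ Sum.inr) h)

theorem schurCompl_add_schurCompl_le (h₁ : W₁.PosDef) (h₂ : W₂.PosDef) :
    W₁.schurCompl + W₂.schurCompl ≤ (W₁ + W₂).schurCompl := by
  refine .of_dotProduct_mulVec_nonneg
    ((h₁.add h₂).schurCompl.1.sub (h₁.schurCompl.1.add h₂.schurCompl.1)) fun x => ?_
  obtain ⟨u, hu⟩ := (h₁.add h₂).exists_dotProduct_schurCompl_mulVec_eq x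
  rw [sub_mulVec, dotProduct_sub, sub_nonneg, hu, add_mulVec, dotProduct_add, add_mulVec,
    dotProduct_add]
  exact add_le_add (h₁.dotProduct_schurCompl_mulVec_le u x) (h₂.dotProduct_schurCompl_mulVec_le u x)

variable [DecidableEq p]

theorem PosDef.re_det_eq_re_det_toBlocks₁₁_mul (hW : W.PosDef) :
    RCLike.re W.det = RCLike.re W.toBlocks₁₁.det * RCLike.re W.schurCompl.det := by
  have := hW.toBlocks₁₁.isUnit.invertible
  conv_lhs => rw [← fromBlocks_toBlocks W, det_fromBlocks₁₁, invOf_eq_nonsing_inv]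
  rw [hW.toBlocks₁₁.1.det_eq_ofReal_prod_eigenvalues, RCLike.re_ofReal_mul, RCLike.ofReal_re]
  rfl

theorem PosDef.re_det_schurCompl_rpow_add_le [Nonempty p] (h₁ : W₁.PosDef) (h₂ : W₂.PosDef) :
    RCLike.re W₁.schurCompl.det ^ (Fintype.card p : ℝ)⁻¹ +
        RCLike.re W₂.schurCompl.det ^ (Fintype.card p : ℝ)⁻¹ ≤
      RCLike.re (W₁ + W₂).schurCompl.det ^ (Fintype.card p : ℝ)⁻¹ :=
  h₁.schurCompl.re_det_rpow_add_le_of_add_le h₂.schurCompl (schurCompl_add_schurCompl_le h₁ h₂)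

end Schur

section Minors

variable [DecidableEq ι]

noncomputable def principalMinor {R : Type*} [CommRing R] (M : Matrix ι ι R) (s : Finset ι) : R :=
  (M.submatrix (Subtype.val : s → ι) Subtype.val).det

theorem principalMinor_smul {R : Type*} [CommRing R] (c : R) (M : Matrix ι ι R) (s : Finset ι) :
    (c • M).principalMinor s = c ^ #s * M.principalMinor s := by
  rw [principalMinor, principalMinor, ← Fintype.card_coe, ← det_smul]
  rfl

noncomputable def schurComplOn {R : Type*} [CommRing R] (M : Matrix ι ι R) (s : Finset ι) :
    Matrix {i // i ∉ s} {i // i ∉ s} R :=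
  (M.submatrix (Equiv.sumCompl (· ∈ s)) (Equiv.sumCompl (· ∈ s))).schurCompl

variable {M : Matrix ι ι 𝕜}

theorem PosDef.re_principalMinor_pos (hM : M.PosDef) (s : Finset ι) :
    0 < RCLike.re (M.principalMinor s) :=
  (RCLike.pos_iff.mp (hM.submatrix Subtype.val_injective).det_pos).1

variable [Fintype ι]

open Polynomial in
theorem IsHermitian.sum_principalMinor_eq_sum_prod_eigenvalues (hM : M.IsHermitian) {k : ℕ}
    (hk : k ≤ Fintype.card ι) :
    ∑ s ∈ univ.powersetCard k, M.principalMinor s =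
      ∑ t ∈ univ.powersetCard k, ∏ i ∈ t, (hM.eigenvalues i : 𝕜) := by
  have h := M.charpoly_coeff_eq_sum_minors k hk
  simp_rw [hM.charpoly_eq, sub_eq_add_neg, ← map_neg C] at h
  rw [prod_X_add_C_coeff _ _ (by simp), card_univ, Nat.sub_sub_self hk] at h
  simp_rw [prod_neg] at h
  unfold principalMinor
  rw [← mul_right_inj' (pow_ne_zero k (neg_ne_zero.mpr one_ne_zero) : (-1 : 𝕜) ^ k ≠ 0), ← h,
    mul_sum]
  refine sum_congr rfl fun t ht => ?_
  rw [(mem_powersetCard.mp ht).2]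

theorem PosDef.re_det_schurComplOn_pos (hM : M.PosDef) (s : Finset ι) :
    0 < RCLike.re (M.schurComplOn s).det :=
  (RCLike.pos_iff.mp (hM.submatrix (Equiv.sumCompl (· ∈ s)).injective).schurCompl.det_pos).1

theorem PosDef.re_det_eq_re_principalMinor_mul (hM : M.PosDef) (s : Finset ι) :
    RCLike.re M.det = RCLike.re (M.principalMinor s) * RCLike.re (M.schurComplOn s).det := by
  rw [← det_submatrix_equiv_self (Equiv.sumCompl (· ∈ s)),
    (hM.submatrix (Equiv.sumCompl (· ∈ s)).injective).re_det_eq_re_det_toBlocks₁₁_mul]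
  rfl

theorem PosDef.re_det_div_sum_re_principalMinor (hM : M.PosDef) (S : Finset (Finset ι)) :
    RCLike.re M.det / ∑ s ∈ S, RCLike.re (M.principalMinor s) =
      (∑ s ∈ S, (RCLike.re (M.schurComplOn s).det)⁻¹)⁻¹ := by
  rw [← inv_div, sum_div]
  congr 1
  refine sum_congr rfl fun s _ => ?_
  have := hM.re_principalMinor_pos s
  rw [hM.re_det_eq_re_principalMinor_mul s]
  field_simp

theorem PosDef.re_det_schurComplOn_rpow_add_le {A B : Matrix ι ι 𝕜} (hA : A.PosDef)
    (hB : B.PosDef) (s : Finset ι) [Nonempty {i // i ∉ s}] :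
    RCLike.re (A.schurComplOn s).det ^ (Fintype.card {i // i ∉ s} : ℝ)⁻¹ +
        RCLike.re (B.schurComplOn s).det ^ (Fintype.card {i // i ∉ s} : ℝ)⁻¹ ≤
      RCLike.re ((A + B).schurComplOn s).det ^ (Fintype.card {i // i ∉ s} : ℝ)⁻¹ :=
  (hA.submatrix (Equiv.sumCompl (· ∈ s)).injective).re_det_schurCompl_rpow_add_le
    (hB.submatrix (Equiv.sumCompl (· ∈ s)).injective)

end Minors

end Matrix

section Quotient

variable {n α : ℕ} {𝕜 : Type*} [RCLike 𝕜] {M : Matrix (Fin n) (Fin n) 𝕜}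

theorem esymm_self_eq_prod (x : Fin n → ℝ) : esymm n x = ∏ i, x i := by
  have : univ.powersetCard n = {(univ : Finset (Fin n))} := by
    simpa using powersetCard_self (univ : Finset (Fin n))
  rw [esymm, this, sum_singleton]

theorem Matrix.IsHermitian.esymm_self_eigenvalues (hM : M.IsHermitian) :
    esymm n hM.eigenvalues = RCLike.re M.det := by
  rw [esymm_self_eq_prod, hM.det_eq_ofReal_prod_eigenvalues, RCLike.ofReal_re]

theorem Matrix.IsHermitian.esymm_eigenvalues (hM : M.IsHermitian) {k : ℕ} (hk : k ≤ n) :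
    esymm k hM.eigenvalues = RCLike.re (∑ s ∈ univ.powersetCard k, M.principalMinor s) := by
  rw [hM.sum_principalMinor_eq_sum_prod_eigenvalues (by simpa using hk), esymm]
  simp only [← RCLike.ofReal_prod, ← RCLike.ofReal_sum, RCLike.ofReal_re]

theorem Matrix.IsHermitian.esymm_eigenvalues_smul (hM : M.IsHermitian) (r : ℝ)
    (hrM : (r • M).IsHermitian) {k : ℕ} (hk : k ≤ n) :
    esymm k hrM.eigenvalues = r ^ k * esymm k hM.eigenvalues := by
  rw [hM.esymm_eigenvalues hk, hrM.esymm_eigenvalues hk, ← RCLike.re_ofReal_mul,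
    RCLike.ofReal_pow, mul_sum]
  congr 1
  refine sum_congr rfl fun s hs => ?_
  rw [RCLike.real_smul_eq_coe_smul (K := 𝕜), principalMinor_smul, (mem_powersetCard.mp hs).2]

theorem Matrix.PosDef.esymm_div_esymm_eigenvalues (hM : M.PosDef) :
    esymm n hM.1.eigenvalues / esymm (n - α) hM.1.eigenvalues =
      (∑ s ∈ univ.powersetCard (n - α), (RCLike.re (M.schurComplOn s).det)⁻¹)⁻¹ := by
  rw [hM.1.esymm_self_eigenvalues, hM.1.esymm_eigenvalues (Nat.sub_le n α), map_sum,
    hM.re_det_div_sum_re_principalMinor]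

theorem Matrix.PosDef.esymm_div_esymm_rpow_add_le (hα : α ≠ 0) (hαn : α ≤ n)
    {A B : Matrix (Fin n) (Fin n) 𝕜} (hA : A.PosDef) (hB : B.PosDef) :
    (esymm n hA.1.eigenvalues / esymm (n - α) hA.1.eigenvalues) ^ (α⁻¹ : ℝ) +
        (esymm n hB.1.eigenvalues / esymm (n - α) hB.1.eigenvalues) ^ (α⁻¹ : ℝ) ≤
      (esymm n (hA.add hB).1.eigenvalues / esymm (n - α) (hA.add hB).1.eigenvalues) ^
        (α⁻¹ : ℝ) := by
  rw [hA.esymm_div_esymm_eigenvalues, hB.esymm_div_esymm_eigenvalues,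
    (hA.add hB).esymm_div_esymm_eigenvalues]
  refine inv_sum_inv_rpow_add_le_of_rpow_add_le _ hα (fun s _ => hA.re_det_schurComplOn_pos s)
    (fun s _ => hB.re_det_schurComplOn_pos s) (fun s _ => (hA.add hB).re_det_schurComplOn_pos s)
    fun s hs => ?_
  have hcard : Fintype.card {i // i ∉ s} = α := by
    rw [Fintype.card_subtype_compl, Fintype.card_coe, (mem_powersetCard.mp hs).2,
      Fintype.card_fin]
    omega
  have : Nonempty {i // i ∉ s} := Fintype.card_pos_iff.mp (by omega)
  simpa only [hcard] using hA.re_det_schurComplOn_rpow_add_le hB s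

theorem Matrix.PosDef.esymm_div_esymm_rpow_smul (hα : α ≠ 0) (hαn : α ≤ n) (hM : M.PosDef)
    {r : ℝ} (hr : 0 < r) :
    (esymm n (hM.smul hr).1.eigenvalues / esymm (n - α) (hM.smul hr).1.eigenvalues) ^
        (α⁻¹ : ℝ) =
      r * (esymm n hM.1.eigenvalues / esymm (n - α) hM.1.eigenvalues) ^ (α⁻¹ : ℝ) := by
  have hq : 0 ≤ esymm n hM.1.eigenvalues / esymm (n - α) hM.1.eigenvalues := by
    rw [hM.esymm_div_esymm_eigenvalues]
    exact inv_nonneg.mpr (sum_nonneg fun s _ => (inv_pos.mpr (hM.re_det_schurComplOn_pos s)).le)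
  rw [hM.1.esymm_eigenvalues_smul r _ le_rfl, hM.1.esymm_eigenvalues_smul r _ (Nat.sub_le n α),
    mul_div_mul_comm, div_eq_mul_inv (r ^ n), ← pow_sub₀ r hr.ne' (Nat.sub_le n α),
    Nat.sub_sub_self hαn, Real.mul_rpow (by positivity) hq, Real.pow_rpow_inv_natCast hr.le hα]

end Quotient

theorem hermitian_quotient_rpow_concave_general (n α : ℕ) (hα1 : 1 ≤ α) (hαn : α ≤ n)
    (A B : Matrix (Fin n) (Fin n) ℂ) (hA : A.PosDef) (hB : B.PosDef)
    (t : ℝ) (ht0 : 0 ≤ t) (ht1 : t ≤ 1) :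
    ((1 - t) • A + t • B).PosDef ∧
      ∀ hC : ((1 - t) • A + t • B).IsHermitian,
        (esymm n hC.eigenvalues / esymm (n - α) hC.eigenvalues) ^ ((1 : ℝ) / (α : ℝ)) ≥
          (1 - t) * (esymm n hA.1.eigenvalues / esymm (n - α) hA.1.eigenvalues) ^
              ((1 : ℝ) / (α : ℝ)) +
            t * (esymm n hB.1.eigenvalues / esymm (n - α) hB.1.eigenvalues) ^
              ((1 : ℝ) / (α : ℝ)) := by
  obtain rfl | ht0 := ht0.eq_or_lt
  · rw [show (1 - 0 : ℝ) • A + (0 : ℝ) • B = A by simp]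
    exact ⟨hA, fun _ => by simp⟩
  obtain rfl | ht1 := ht1.eq_or_lt
  · rw [show (1 - 1 : ℝ) • A + (1 : ℝ) • B = B by simp]
    exact ⟨hB, fun _ => by simp⟩
  have hα : α ≠ 0 := by omega
  have hA' := hA.smul (sub_pos.mpr ht1)
  have hB' := hB.smul ht0
  refine ⟨hA'.add hB', fun _ => ?_⟩
  rw [ge_iff_le, one_div, ← hA.esymm_div_esymm_rpow_smul hα hαn (sub_pos.mpr ht1),
    ← hB.esymm_div_esymm_rpow_smul hα hαn ht0]
  exact hA'.esymm_div_esymm_rpow_add_le hα hαn hB'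

/-- matrix-level concavity of the `(n, n-α)`-quotient operator on
Hermitian positive definite matrices. -/
theorem hermitian_quotient_rpow_concave (n α : ℕ) (hn : 2 ≤ n) (hα1 : 1 ≤ α) (hαn : α ≤ n)
    (A B : Matrix (Fin n) (Fin n) ℂ) (hA : A.PosDef) (hB : B.PosDef)
    (t : ℝ) (ht0 : 0 ≤ t) (ht1 : t ≤ 1) :
    ((1 - t) • A + t • B).PosDef ∧
      ∀ hC : ((1 - t) • A + t • B).IsHermitian,
        (esymm n hC.eigenvalues / esymm (n - α) hC.eigenvalues) ^ ((1 : ℝ) / (α : ℝ)) ≥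
          (1 - t) * (esymm n hA.1.eigenvalues / esymm (n - α) hA.1.eigenvalues) ^
              ((1 : ℝ) / (α : ℝ)) +
            t * (esymm n hB.1.eigenvalues / esymm (n - α) hB.1.eigenvalues) ^
              ((1 : ℝ) / (α : ℝ)) :=
  hermitian_quotient_rpow_concave_general n α hα1 hαn A B hA hB t ht0 ht1
end
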